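/- Let A > 0, B ≥ 0, K > 0 and P > 0, and define η(p) = (A + B·p)/log₂(1 + K·p) and φ(p) = B·log₂(1 + K·p) − (K/ln 2)·(A + B·p)/(1 + K·p). If φ(P) ≤ 0, then η is strictly decreasing on (0, P]; in particular, η attains its minimum over (0, P] at p = P. -/

import Mathlib

/-!
Writing `L p = log₂ (1 + K p)`, the quotient rule gives `η' = φ / L²`, so `η'` has the sign of `φ`.
Differentiating `φ`, the terms `± B K / ((1 + K p) ln 2)` cancel and
`φ' p = K² (A + B p) / (ln 2 · (1 + K p)²) > 0`. Hence `φ` is strictly increasing on `[0, ∞)`,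
so `φ < φ P ≤ 0` on `(0, P)` and `η` is strictly decreasing on `(0, P]`.
-/

open Real Set

namespace PowerAllocation

variable {A B K p : ℝ}

noncomputable def phi (A B K p : ℝ) : ℝ :=
  B * logb 2 (1 + K * p) - K / log 2 * ((A + B * p) / (1 + K * p))

theorem hasDerivAt_const_add_mul (a b p : ℝ) : HasDerivAt (fun x => a + b * x) b p := by
  simpa using ((hasDerivAt_id p).const_mul b).const_add a

theorem hasDerivAt_logb_one_add_mul (hp : 1 + K * p ≠ 0) :
    HasDerivAt (fun x => logb 2 (1 + K * x)) (K / ((1 + K * p) * log 2)) p := by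
  have h := ((hasDerivAt_const_add_mul 1 K p).log hp).div_const (log 2)
  rw [div_div] at h
  exact h

theorem one_add_mul_pos (hK : 0 ≤ K) (hp : 0 ≤ p) : 0 < 1 + K * p := by
  linarith [mul_nonneg hK hp]

theorem logb_one_add_mul_pos (hK : 0 < K) (hp : 0 < p) : 0 < logb 2 (1 + K * p) :=
  logb_pos one_lt_two (by linarith [mul_pos hK hp])

theorem hasDerivAt_phi (hp : 1 + K * p ≠ 0) :
    HasDerivAt (phi A B K) (K ^ 2 * (A + B * p) / (log 2 * (1 + K * p) ^ 2)) p := by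
  have hquot := (hasDerivAt_const_add_mul A B p).div (hasDerivAt_const_add_mul 1 K p) hp
  refine (((hasDerivAt_logb_one_add_mul hp).const_mul B).sub
    (hquot.const_mul (K / log 2))).congr_deriv ?_
  have hlog : log 2 ≠ 0 := (log_pos one_lt_two).ne'
  field_simp
  ring

theorem strictMonoOn_phi (hA : 0 < A) (hB : 0 ≤ B) (hK : 0 < K) :
    StrictMonoOn (phi A B K) (Ici 0) := by
  refine strictMonoOn_of_deriv_pos (convex_Ici 0) (fun p hp =>
    (hasDerivAt_phi (one_add_mul_pos hK.le hp).ne').continuousAt.continuousWithinAt) ?_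
  intro p hp
  rw [interior_Ici, mem_Ioi] at hp
  have h1 := one_add_mul_pos hK.le hp.le
  rw [(hasDerivAt_phi h1.ne').deriv]
  have hApos : 0 < A + B * p := by nlinarith
  have := log_pos one_lt_two
  positivity

theorem hasDerivAt_eta (hp : 1 + K * p ≠ 0) (hL : logb 2 (1 + K * p) ≠ 0) :
    HasDerivAt (fun x => (A + B * x) / logb 2 (1 + K * x))
      (phi A B K p / logb 2 (1 + K * p) ^ 2) p := by
  refine ((hasDerivAt_const_add_mul A B p).div
    (hasDerivAt_logb_one_add_mul hp) hL).congr_deriv ?_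
  have hlog : log 2 ≠ 0 := (log_pos one_lt_two).ne'
  unfold phi
  field_simp

theorem strictAntiOn_eta_of_phi_nonpos {P : ℝ} (hA : 0 < A) (hB : 0 ≤ B) (hK : 0 < K)
    (hφ : phi A B K P ≤ 0) :
    StrictAntiOn (fun p => (A + B * p) / logb 2 (1 + K * p)) (Ioc 0 P) := by
  have hderiv : ∀ p, 0 < p → HasDerivAt (fun x => (A + B * x) / logb 2 (1 + K * x))
      (phi A B K p / logb 2 (1 + K * p) ^ 2) p := fun p hp =>
    hasDerivAt_eta (one_add_mul_pos hK.le hp.le).ne' (logb_one_add_mul_pos hK hp).ne'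
  refine strictAntiOn_of_deriv_neg (convex_Ioc 0 P)
    (fun p hp => (hderiv p hp.1).continuousAt.continuousWithinAt) ?_
  intro p hp
  rw [interior_Ioc] at hp
  rw [(hderiv p hp.1).deriv]
  have hφp : phi A B K p < 0 :=
    (strictMonoOn_phi hA hB hK hp.1.le (hp.1.trans hp.2).le hp.2).trans_le hφ
  exact div_neg_of_neg_of_pos hφp (pow_pos (logb_one_add_mul_pos hK hp.1) 2)

end PowerAllocation

open PowerAllocation in
theorem eta_strictAnti_of_phi_nonpos_general (A B K P : ℝ)
    (hA : 0 < A) (hB : 0 ≤ B) (hK : 0 < K)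
    (hφ : B * Real.logb 2 (1 + K * P) -
        K / Real.log 2 * ((A + B * P) / (1 + K * P)) ≤ 0) :
    StrictAntiOn (fun p : ℝ => (A + B * p) / Real.logb 2 (1 + K * p)) (Set.Ioc 0 P) ∧
    ∀ p ∈ Set.Ioc (0 : ℝ) P,
      (A + B * P) / Real.logb 2 (1 + K * P) ≤ (A + B * p) / Real.logb 2 (1 + K * p) := by
  have hanti := strictAntiOn_eta_of_phi_nonpos hA hB hK hφ
  exact ⟨hanti, fun p hp => hanti.antitoneOn hp ⟨hp.1.trans_le hp.2, le_rfl⟩ hp.2⟩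

/-- If φ(P) ≤ 0 then η(p) = (A + B·p)/log₂(1 + K·p) is strictly decreasing on (0, P],
so its minimum over (0, P] is attained at p = P. -/
theorem eta_strictAnti_of_phi_nonpos (A B K P : ℝ)
    (hA : 0 < A) (hB : 0 ≤ B) (hK : 0 < K) (hP : 0 < P)
    (hφ : B * Real.logb 2 (1 + K * P) -
        K / Real.log 2 * ((A + B * P) / (1 + K * P)) ≤ 0) :
    StrictAntiOn (fun p : ℝ => (A + B * p) / Real.logb 2 (1 + K * p)) (Set.Ioc 0 P) ∧
    ∀ p ∈ Set.Ioc (0 : ℝ) P,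
      (A + B * P) / Real.logb 2 (1 + K * P) ≤ (A + B * p) / Real.logb 2 (1 + K * p) :=
  eta_strictAnti_of_phi_nonpos_general A B K P hA hB hK hφ
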